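/- Let S be the star K_{1,n−1} on n vertices and s ≥ 1. Every straight-line drawing of S with spanning ratio at most s has edge-length ratio at least 2^{⌊(n−2)/(48 s²)⌋}, i.e., edge-length ratio in 2^{Ω(n/s²)}. -/

import Mathlib

/-!
Let `c` be the centre and `r` the length of the shortest edge. Every path between two leaves
`p, q` runs through `c`, so `|pc| + |cq| ≤ s |pq|`. Hence the leaves in a dyadic annulus
`r' ≤ |pc| ≤ 2r'` are pairwise at least `2r'/s` apart, and comparing areas of disjoint discs
shows there are at most `(2s + 1)² ≤ 48 s²` of them. If every edge were shorter than `2^t r`,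
the `n - 1` leaves would fill the `t` annuli starting at radius `r`, so `n - 1 ≤ 48 t s² ≤ n - 2`.
-/

noncomputable def wlen {V : Type*} {G : SimpleGraph V} (ρ : V → EuclideanSpace ℝ (Fin 2)) :
    ∀ {u v : V}, G.Walk u v → ℝ
  | _, _, SimpleGraph.Walk.nil => 0
  | u, _, SimpleGraph.Walk.cons (v := b) _ p => dist (ρ u) (ρ b) + wlen ρ p

/-- The star `K_{1,n-1}` on `n` vertices: vertex `0` is the center, adjacent to all others. -/
def starGraph (n : ℕ) [NeZero n] : SimpleGraph (Fin n) where
  Adj a b := a ≠ b ∧ (a = 0 ∨ b = 0)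
  symm := ⟨by rintro a b ⟨h, h2⟩; exact ⟨h.symm, h2.symm⟩⟩
  loopless := ⟨by rintro a ⟨h, -⟩; exact h rfl⟩

open MeasureTheory Metric Module

theorem Finset.card_mul_pow_finrank_le_of_pairwise_le_dist {E : Type*} [NormedAddCommGroup E]
    [NormedSpace ℝ E] [FiniteDimensional ℝ E] (P : Finset E) (c : E) {R ε : ℝ}
    (hR : 0 ≤ R) (hε : 0 < ε) (hP : ∀ p ∈ P, dist p c ≤ R)
    (hsep : (P : Set E).Pairwise fun p q => 2 * ε ≤ dist p q) :
    P.card * ε ^ finrank ℝ E ≤ (R + ε) ^ finrank ℝ E := by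
  let _ : MeasurableSpace E := borel E
  have _ : BorelSpace E := ⟨rfl⟩
  set μ := (finBasis ℝ E).addHaar
  have hdisj : (P : Set E).PairwiseDisjoint (ball · ε) := fun p hp q hq hpq =>
    ball_disjoint_ball (by linarith [hsep hp hq hpq])
  have hsub : (⋃ p ∈ P, ball p ε) ⊆ ball c (R + ε) := by
    simp only [Set.iUnion_subset_iff]
    intro p hp y hy
    exact (dist_triangle y p c).trans_lt (by linarith [hP p hp, mem_ball.mp hy])
  have hvol : (P.card : ENNReal) * ENNReal.ofReal (ε ^ finrank ℝ E) * μ (ball 0 1)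
      ≤ ENNReal.ofReal ((R + ε) ^ finrank ℝ E) * μ (ball 0 1) :=
    calc (P.card : ENNReal) * ENNReal.ofReal (ε ^ finrank ℝ E) * μ (ball 0 1)
        = ∑ p ∈ P, μ (ball p ε) := by simp [μ.addHaar_ball_of_pos _ hε, mul_assoc]
      _ = μ (⋃ p ∈ P, ball p ε) :=
          (measure_biUnion_finset hdisj fun _ _ => measurableSet_ball).symm
      _ ≤ μ (ball c (R + ε)) := measure_mono hsub
      _ = ENNReal.ofReal ((R + ε) ^ finrank ℝ E) * μ (ball 0 1) :=
          μ.addHaar_ball_of_pos _ (by linarith)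
  rwa [ENNReal.mul_le_mul_iff_left (measure_ball_pos μ 0 one_pos).ne' measure_ball_lt_top.ne,
    ← ENNReal.ofReal_natCast, ← ENNReal.ofReal_mul (by positivity),
    ENNReal.ofReal_le_ofReal_iff (by positivity)] at hvol

/-- A straight-line star with centre `c` and leaves `P` has spanning ratio at most `s`
(the only path between two leaves runs through the centre). -/
def IsStarSpanner {E : Type*} [PseudoMetricSpace E] (c : E) (s : ℝ) (P : Set E) : Prop :=
  P.Pairwise fun p q => dist p c + dist c q ≤ s * dist p q

namespace IsStarSpanner

variable {E : Type*} [NormedAddCommGroup E] [NormedSpace ℝ E] [FiniteDimensional ℝ E]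
  {c : E} {s r : ℝ} {P : Finset E}

theorem card_le_of_forall_dist_mem_Icc (h : IsStarSpanner c s P) (hr : 0 < r) (hs : 0 < s)
    (hP : ∀ p ∈ P, dist p c ∈ Set.Icc r (2 * r)) :
    (P.card : ℝ) ≤ (2 * s + 1) ^ finrank ℝ E := by
  have hsep : (P : Set E).Pairwise fun p q => 2 * (r / s) ≤ dist p q := by
    intro p hp q hq hpq
    have hpath : dist p c + dist c q ≤ s * dist p q := h hp hq hpq
    rw [dist_comm c q] at hpath
    rw [mul_div_assoc', div_le_iff₀ hs]
    linarith [(hP p hp).1, (hP q hq).1]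
  have hpack := P.card_mul_pow_finrank_le_of_pairwise_le_dist c (by positivity) (by positivity)
    (fun p hp => (hP p hp).2) hsep
  rw [show 2 * r + r / s = (2 * s + 1) * (r / s) by field_simp, mul_pow] at hpack
  exact le_of_mul_le_mul_right hpack (by positivity)

theorem card_filter_dist_lt_two_pow_mul_le (h : IsStarSpanner c s P) (hr : 0 < r) (hs : 0 < s)
    (hmin : ∀ p ∈ P, r ≤ dist p c) (k : ℕ) :
    ((P.filter fun p => dist p c < 2 ^ k * r).card : ℝ) ≤ k * (2 * s + 1) ^ finrank ℝ E := by
  classical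
  induction k with
  | zero =>
    rw [Finset.filter_false_of_mem fun p hp => by simpa using hmin p hp]
    simp
  | succ k ih =>
    have hannulus := card_le_of_forall_dist_mem_Icc
      (P := P.filter fun p => dist p c ∈ Set.Icc (2 ^ k * r) (2 * (2 ^ k * r)))
      (h.mono (Finset.coe_subset.2 (Finset.filter_subset _ _))) (by positivity) hs
      (fun p hp => (Finset.mem_filter.1 hp).2)
    have hsplit : (P.filter fun p => dist p c < 2 ^ (k + 1) * r) ⊆
        (P.filter fun p => dist p c < 2 ^ k * r) ∪
          P.filter fun p => dist p c ∈ Set.Icc (2 ^ k * r) (2 * (2 ^ k * r)) := by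
      intro p hp
      rw [Finset.mem_filter] at hp
      simp only [Finset.mem_union, Finset.mem_filter, Set.mem_Icc, hp.1, true_and]
      rcases lt_or_ge (dist p c) (2 ^ k * r) with hnear | hfar
      · exact Or.inl hnear
      · exact Or.inr ⟨hfar, (hp.2.trans_eq (by ring)).le⟩
    calc ((P.filter fun p => dist p c < 2 ^ (k + 1) * r).card : ℝ)
        ≤ (P.filter fun p => dist p c < 2 ^ k * r).card
          + (P.filter fun p => dist p c ∈ Set.Icc (2 ^ k * r) (2 * (2 ^ k * r))).card := by
          exact_mod_cast (Finset.card_le_card hsplit).trans (Finset.card_union_le _ _)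
      _ ≤ (k + 1 : ℕ) * (2 * s + 1) ^ finrank ℝ E := by push_cast; linarith

theorem exists_two_pow_mul_le_dist (h : IsStarSpanner c s P) (hr : 0 < r) (hs : 0 < s)
    (hmin : ∀ p ∈ P, r ≤ dist p c) {t : ℕ} (hcard : t * (2 * s + 1) ^ finrank ℝ E < P.card) :
    ∃ p ∈ P, 2 ^ t * r ≤ dist p c := by
  by_contra! hnear
  have hcount := h.card_filter_dist_lt_two_pow_mul_le hr hs hmin t
  rw [Finset.filter_true_of_mem hnear] at hcount
  linarith

end IsStarSpanner

theorem dist_le_wlen {V : Type*} {G : SimpleGraph V} (ρ : V → EuclideanSpace ℝ (Fin 2)) :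
    ∀ {u v : V} (p : G.Walk u v), dist (ρ u) (ρ v) ≤ wlen ρ p
  | _, _, .nil => by simp [wlen]
  | u, v, .cons (v := b) _ p =>
    calc dist (ρ u) (ρ v) ≤ dist (ρ u) (ρ b) + dist (ρ b) (ρ v) := dist_triangle _ _ _
      _ ≤ dist (ρ u) (ρ b) + wlen ρ p := by gcongr; exact dist_le_wlen ρ p

theorem starGraph.dist_add_dist_le_wlen {n : ℕ} [NeZero n] (ρ : Fin n → EuclideanSpace ℝ (Fin 2))
    {u v : Fin n} (hu : u ≠ 0) (huv : u ≠ v) (p : (starGraph n).Walk u v) :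
    dist (ρ u) (ρ 0) + dist (ρ 0) (ρ v) ≤ wlen ρ p := by
  cases p with
  | nil => exact absurd rfl huv
  | cons hadj p =>
    obtain rfl : _ = 0 := hadj.2.resolve_left hu
    exact (add_le_add_iff_left _).2 (dist_le_wlen ρ p)

theorem starGraph.isStarSpanner_image {n : ℕ} [NeZero n] {ρ : Fin n → EuclideanSpace ℝ (Fin 2)}
    {s : ℝ} (hspan : ∀ u v : Fin n, u ≠ v →
      ∃ p : (starGraph n).Walk u v, wlen ρ p ≤ s * dist (ρ u) (ρ v)) :
    IsStarSpanner (ρ 0) s ↑((Finset.univ.erase 0).image ρ) := by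
  rintro _ hp _ hq hpq
  obtain ⟨u, hu, rfl⟩ := Finset.mem_image.1 hp
  obtain ⟨v, -, rfl⟩ := Finset.mem_image.1 hq
  have huv : u ≠ v := fun h => hpq (congrArg ρ h)
  obtain ⟨w, hw⟩ := hspan u v huv
  exact (starGraph.dist_add_dist_le_wlen ρ (Finset.ne_of_mem_erase hu) huv w).trans hw

/-- Any straight-line drawing of the star on `n` vertices with spanning ratio at most `s ≥ 1`
has edge-length ratio at least `2^⌊(n-2)/(48·s²)⌋`. -/
theorem star_spanning_ratio_edge_length_ratio_lower_bound
    (n : ℕ) [NeZero n] (hn : 2 ≤ n)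
    (ρ : Fin n → EuclideanSpace ℝ (Fin 2)) (hinj : Function.Injective ρ)
    (s : ℝ) (hs : 1 ≤ s)
    (hspan : ∀ u v : Fin n, u ≠ v →
      ∃ p : (starGraph n).Walk u v, wlen ρ p ≤ s * dist (ρ u) (ρ v)) :
    ∃ a b c e : Fin n, (starGraph n).Adj a b ∧ (starGraph n).Adj c e ∧
      (2 : ℝ) ^ ⌊((n : ℝ) - 2) / (48 * s ^ 2)⌋₊ * dist (ρ c) (ρ e) ≤ dist (ρ a) (ρ b) := by
  classical
  set leaves := Finset.univ.erase (0 : Fin n)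
  have hleaves : leaves.Nonempty := ⟨⟨1, hn⟩, by simp [leaves, Fin.ext_iff]⟩
  obtain ⟨i₀, hi₀, hmin⟩ := leaves.exists_min_image (fun i => dist (ρ i) (ρ 0)) hleaves
  have hr : 0 < dist (ρ i₀) (ρ 0) := dist_pos.2 (hinj.ne (Finset.ne_of_mem_erase hi₀))
  set t := ⌊((n : ℝ) - 2) / (48 * s ^ 2)⌋₊
  have hcard : t * (2 * s + 1) ^ finrank ℝ (EuclideanSpace ℝ (Fin 2)) < (leaves.image ρ).card := by
    have ht : (t : ℝ) * (48 * s ^ 2) ≤ n - 2 :=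
      (le_div_iff₀ (by positivity)).1 (Nat.floor_le (div_nonneg (by simp [hn]) (by positivity)))
    rw [Finset.card_image_of_injective _ hinj, Finset.card_erase_of_mem (Finset.mem_univ _),
      Finset.card_univ, Fintype.card_fin, finrank_euclideanSpace_fin, Nat.cast_sub (by omega)]
    have hsq : (2 * s + 1) ^ 2 ≤ 48 * s ^ 2 := by nlinarith
    push_cast
    linarith [mul_le_mul_of_nonneg_left hsq t.cast_nonneg]
  obtain ⟨_, hp, hfar⟩ := (starGraph.isStarSpanner_image hspan).exists_two_pow_mul_le_dist hr
    (by positivity) (by simpa [leaves] using hmin) hcard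
  obtain ⟨j, hj, rfl⟩ := Finset.mem_image.1 hp
  exact ⟨j, 0, i₀, 0, ⟨Finset.ne_of_mem_erase hj, .inr rfl⟩,
    ⟨Finset.ne_of_mem_erase hi₀, .inr rfl⟩, hfar⟩
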